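/- Let a, b, c ∈ ℂ with Re(c) > Re(b) > 0, and let z ∈ ℂ with |z| < 1. Then Σ_{n≥0} ((a)_n (b)_n / ((c)_n · n!)) zⁿ = (Γ(c)/(Γ(b)Γ(c−b))) ∫_0^1 u^{b−1} (1−u)^{c−b−1} (1−z·u)^{−a} du, where the powers are principal branches (well defined since u, 1−u > 0 and 1−zu has positive real part for u ∈ [0,1]). -/

import Mathlib

/-!
Expand `(1 - z u)^(-a) = Σ (a)ₙ/n! (z u)ⁿ` by the binomial series; since `|z u| ≤ |z| < 1` on
`[0, 1]` the expansion is dominated by `Σ |(a)ₙ/n!| |z|ⁿ` times the integrable Beta weight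
`|u^(b-1)(1-u)^(c-b-1)|`, so it may be integrated term by term. The `n`-th moment of the weight is
`B(b+n, c-b) = Γ(b+n)Γ(c-b)/Γ(c+n)`, and `Γ(s+n) = (s)ₙ Γ(s)` turns the normalised moments
`Γ(c)/(Γ(b)Γ(c-b)) · B(b+n, c-b)` into `(b)ₙ/(c)ₙ`.
-/

open Complex FormalMultilinearSeries MeasureTheory Set
open scoped Nat

lemma ascPochhammer_eval_div_factorial_eq_choose (a : ℂ) (n : ℕ) :
    (ascPochhammer ℂ n).eval a / n ! = Ring.choose (a + n - 1) n := by
  rw [← Ring.multichoose_eq, div_eq_iff (mod_cast n.factorial_ne_zero),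
    ← Polynomial.ascPochhammer_smeval_eq_eval,
    ← Ring.factorial_nsmul_multichoose_eq_ascPochhammer, nsmul_eq_mul, mul_comm]

theorem hasFPowerSeriesOnBall_one_sub_cpow_neg (a : ℂ) :
    HasFPowerSeriesOnBall (fun w ↦ (1 - w) ^ (-a))
      (ofScalars ℂ fun n ↦ (ascPochhammer ℂ n).eval a / n !) 0 1 := by
  simp_rw [ascPochhammer_eval_div_factorial_eq_choose, cpow_neg, inv_eq_one_div]
  exact one_div_one_sub_cpow_hasFPowerSeriesOnBall_zero a

theorem hasSum_ascPochhammer_div_factorial_mul_pow (a : ℂ) {w : ℂ} (hw : ‖w‖ < 1) :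
    HasSum (fun n ↦ (ascPochhammer ℂ n).eval a / n ! * w ^ n) ((1 - w) ^ (-a)) := by
  have := (hasFPowerSeriesOnBall_one_sub_cpow_neg a).hasSum (y := w)
    (by simpa [enorm_eq_nnnorm] using ENNReal.coe_lt_one_iff.mpr hw)
  simpa [ofScalars_apply_eq, mul_comm] using this

theorem summable_norm_ascPochhammer_div_factorial_mul_pow (a : ℂ) {w : ℂ} (hw : ‖w‖ < 1) :
    Summable fun n ↦ ‖(ascPochhammer ℂ n).eval a / n ! * w ^ n‖ := by
  have hr := ((ENNReal.coe_lt_one_iff (p := ‖w‖₊)).mpr hw).trans_le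
    (hasFPowerSeriesOnBall_one_sub_cpow_neg a).r_le
  simpa [norm_mul, norm_pow] using summable_norm_mul_pow _ hr

theorem intervalIntegral_mul_tsum_pow {w : ℝ → ℂ} (hw : IntervalIntegrable w volume 0 1)
    {q : ℕ → ℂ} {z : ℂ} (hq : Summable fun n ↦ ‖q n * z ^ n‖) :
    ∫ u in (0 : ℝ)..1, w u * ∑' n, q n * (z * u) ^ n =
      ∑' n, q n * z ^ n * ∫ u in (0 : ℝ)..1, w u * (u : ℂ) ^ n := by
  set F : ℕ → ℝ → ℂ := fun n u ↦ q n * z ^ n * (w u * (u : ℂ) ^ n)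
  have hF_int (n : ℕ) : IntegrableOn (F n) (Ioc 0 1) := by
    refine (intervalIntegrable_iff_integrableOn_Ioc_of_le zero_le_one).mp ?_
    exact (hw.mul_continuousOn (by fun_prop)).const_mul _
  have hF_le (n : ℕ) : ∫ u in Ioc 0 1, ‖F n u‖ ≤ ‖q n * z ^ n‖ * ∫ u in Ioc 0 1, ‖w u‖ := by
    rw [← integral_const_mul]
    refine setIntegral_mono_on (hF_int n).norm (hw.1.norm.const_mul _) measurableSet_Ioc
      fun u ⟨hu0, hu1⟩ ↦ ?_
    have : ‖(u : ℂ) ^ n‖ ≤ 1 := by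
      simpa [abs_of_pos hu0] using pow_le_one₀ hu0.le hu1
    simp only [F, norm_mul]
    gcongr
    exact mul_le_of_le_one_right (norm_nonneg _) this
  have hF_sum : Summable fun n ↦ ∫ u in Ioc 0 1, ‖F n u‖ :=
    .of_nonneg_of_le (fun n ↦ integral_nonneg fun u ↦ norm_nonneg _) hF_le (hq.mul_right _)
  calc ∫ u in (0 : ℝ)..1, w u * ∑' n, q n * (z * u) ^ n = ∫ u in Ioc 0 1, ∑' n, F n u := by
        rw [intervalIntegral.integral_of_le zero_le_one]
        congr 1 with u
        rw [← tsum_mul_left]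
        congr 1 with n
        simp only [F]; ring
    _ = ∑' n, ∫ u in Ioc 0 1, F n u := (integral_tsum_of_summable_integral_norm hF_int hF_sum).symm
    _ = _ := by simp_rw [F, integral_const_mul, intervalIntegral.integral_of_le zero_le_one]

theorem betaIntegral_add_nat (s t : ℂ) (n : ℕ) :
    betaIntegral (s + n) t =
      ∫ x in (0 : ℝ)..1, (x : ℂ) ^ (s - 1) * (1 - (x : ℂ)) ^ (t - 1) * (x : ℂ) ^ n := by
  rw [betaIntegral, intervalIntegral.integral_of_le zero_le_one,
    intervalIntegral.integral_of_le zero_le_one]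
  refine setIntegral_congr_fun measurableSet_Ioc fun x ⟨hx, _⟩ ↦ ?_
  rw [show s + n - 1 = s - 1 + n by ring, cpow_add _ _ (mod_cast hx.ne'), cpow_natCast]
  ring

lemma ne_neg_natCast_of_re_pos {s : ℂ} (hs : 0 < s.re) (k : ℕ) : s ≠ -k := by
  rintro rfl
  simp only [neg_re, natCast_re, Left.neg_pos_iff] at hs
  exact hs.not_ge k.cast_nonneg

theorem Gamma_div_mul_betaIntegral_add_nat {b c : ℂ} (hb : 0 < b.re) (hcb : b.re < c.re)
    (n : ℕ) :
    Gamma c / (Gamma b * Gamma (c - b)) * betaIntegral (b + n) (c - b) =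
      (ascPochhammer ℂ n).eval b / (ascPochhammer ℂ n).eval c := by
  have hc : 0 < c.re := hb.trans hcb
  have hcb' : 0 < (c - b).re := by simpa using hcb
  have hbn : 0 < (b + n).re := by
    simpa only [add_re, natCast_re] using add_pos_of_pos_of_nonneg hb n.cast_nonneg
  rw [betaIntegral_eq_Gamma_mul_div _ _ hbn hcb', show b + n + (c - b) = c + n by ring,
    ← Gamma_add_nat_div_Gamma_eq b (ne_neg_natCast_of_re_pos hb),
    ← Gamma_add_nat_div_Gamma_eq c (ne_neg_natCast_of_re_pos hc)]
  have := Gamma_ne_zero_of_re_pos hb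
  have := Gamma_ne_zero_of_re_pos hc
  have := Gamma_ne_zero_of_re_pos hcb'
  field_simp

/-- **Euler's integral representation** of the Gauss hypergeometric function: for
`Re c > Re b > 0` and `|z| < 1`,
`Σ_{n≥0} ((a)ₙ(b)ₙ/((c)ₙ n!)) zⁿ
  = (Γ(c)/(Γ(b)Γ(c−b))) ∫_0^1 u^{b−1} (1−u)^{c−b−1} (1−zu)^{−a} du`,
all complex powers being principal branches. -/
theorem euler_integral_hypergeometric
    (a b c : ℂ) (hb : 0 < b.re) (hcb : b.re < c.re) (z : ℂ) (hz : ‖z‖ < 1) :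
    ∑' n : ℕ, (ascPochhammer ℂ n).eval a * (ascPochhammer ℂ n).eval b /
        ((ascPochhammer ℂ n).eval c * (Nat.factorial n : ℂ)) * z ^ n =
      Complex.Gamma c / (Complex.Gamma b * Complex.Gamma (c - b)) *
        ∫ u in (0:ℝ)..1,
          (u : ℂ) ^ (b - 1) * (1 - (u : ℂ)) ^ (c - b - 1) * (1 - z * (u : ℂ)) ^ (-a) := by
  have hexpand (u : ℝ) (hu : u ∈ uIcc 0 1) :
      (1 - z * u) ^ (-a) = ∑' n, (ascPochhammer ℂ n).eval a / n ! * (z * u) ^ n := by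
    rw [uIcc_of_le zero_le_one] at hu
    refine (hasSum_ascPochhammer_div_factorial_mul_pow a ?_).tsum_eq.symm
    simpa [abs_of_nonneg hu.1] using (mul_le_of_le_one_right (norm_nonneg z) hu.2).trans_lt hz
  rw [intervalIntegral.integral_congr fun u hu ↦ by rw [hexpand u hu],
    intervalIntegral_mul_tsum_pow (betaIntegral_convergent hb (by simpa using hcb))
      (summable_norm_ascPochhammer_div_factorial_mul_pow a hz), ← tsum_mul_left]
  refine tsum_congr fun n ↦ ?_
  rw [← betaIntegral_add_nat, mul_left_comm, Gamma_div_mul_betaIntegral_add_nat hb hcb]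
  ring
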